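/- The total-flow map F(x, y) = (t(x,y), t(y,x)) with t(x, y) = τ (1 + α ((x + y)/c)^β), τ, α, c > 0, β ≥ 1, is a monotone operator on [0, ∞)²: for all (x₁, y₁), (x₂, y₂) ∈ [0, ∞)², ⟨F(x₁,y₁) − F(x₂,y₂), (x₁,y₁) − (x₂,y₂)⟩ ≥ 0. -/

import Mathlib

open Set

theorem MonotoneOn.sub_mul_sub_nonneg {R : Type*} [Ring R] [LinearOrder R] [IsStrictOrderedRing R]
    {s : Set R} {f : R → R} (hf : MonotoneOn f s) {a b : R} (ha : a ∈ s) (hb : b ∈ s) :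
    0 ≤ (f a - f b) * (a - b) := by
  rcases le_total b a with hba | hab
  · exact mul_nonneg (sub_nonneg.2 (hf hb ha hba)) (sub_nonneg.2 hba)
  · exact mul_nonneg_of_nonpos_of_nonpos (sub_nonpos.2 (hf ha hb hab)) (sub_nonpos.2 hab)

/-- The pairing collapses to `(g s₁ - g s₂) * (s₁ - s₂)` for the total flows `sᵢ = xᵢ + yᵢ`. -/
theorem MonotoneOn.comp_add_sub_mul_sub_add_sub_mul_sub_nonneg {R : Type*} [CommRing R]
    [LinearOrder R] [IsStrictOrderedRing R] {s : Set R} {g : R → R} (hg : MonotoneOn g s)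
    {x₁ y₁ x₂ y₂ : R} (h₁ : x₁ + y₁ ∈ s) (h₂ : x₂ + y₂ ∈ s) :
    0 ≤ (g (x₁ + y₁) - g (x₂ + y₂)) * (x₁ - x₂) + (g (y₁ + x₁) - g (y₂ + x₂)) * (y₁ - y₂) := by
  have hsum := hg.sub_mul_sub_nonneg h₁ h₂
  rw [add_comm y₁, add_comm y₂]
  linear_combination hsum

theorem monotoneOn_mul_one_add_mul_div_rpow {τ α β c : ℝ} (hτ : 0 ≤ τ) (hα : 0 ≤ α)
    (hβ : 0 ≤ β) (hc : 0 < c) :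
    MonotoneOn (fun s ↦ τ * (1 + α * (s / c) ^ β)) (Ici 0) := by
  intro a ha b _ hab
  have : 0 ≤ a / c := div_nonneg ha hc.le
  dsimp only
  gcongr

/-- the bidirectional travel-time map F(x,y) = (t(x,y), t(y,x)) with the
symmetric pVDF is a monotone operator on [0,∞)². -/
theorem symmetric_pVDF_monotone_operator (τ α β c : ℝ) (hτ : 0 < τ) (hα : 0 < α)
    (hβ : 1 ≤ β) (hc : 0 < c) (t : ℝ → ℝ → ℝ)
    (ht : ∀ x y : ℝ, t x y = τ * (1 + α * (((x + y) / c) ^ β))) :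
    ∀ x₁ y₁ x₂ y₂ : ℝ, 0 ≤ x₁ → 0 ≤ y₁ → 0 ≤ x₂ → 0 ≤ y₂ →
      0 ≤ (t x₁ y₁ - t x₂ y₂) * (x₁ - x₂) + (t y₁ x₁ - t y₂ x₂) * (y₁ - y₂) := by
  intro x₁ y₁ x₂ y₂ hx₁ hy₁ hx₂ hy₂
  have hg := monotoneOn_mul_one_add_mul_div_rpow hτ.le hα.le (zero_le_one.trans hβ) hc
  simp only [ht]
  exact hg.comp_add_sub_mul_sub_add_sub_mul_sub_nonneg (add_nonneg hx₁ hy₁) (add_nonneg hx₂ hy₂)
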